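/- arXiv:1906.02781 — 3 statements merged into one kernel-verified Lean document; each statement's English description precedes it below -/
import Mathlib

section
/- Let (G,σ,h) be a rooted combinatorial map of a connected graph G. For any spanning tree T, the motion operator t (defined by t(i)=σ(i) if the edge of half-edge i is not in T, and t(i)=σ∘α(i) if it is in T) generates a tour visiting every half-edge of G exactly once before returning to h. -/
noncomputable section
attribute [local instance] Classical.propDecidable

namespace TutteActivities

open Finset

variable {V ε : Type*} [Fintype V] [DecidableEq V] [Fintype ε] [DecidableEq ε]

/- A multigraph on vertex set `V` is given by its edge-endpoint map
`ends : ε → V × V`; the ordered pair also serves as a reference orientation. -/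

/-- The ordered endpoints of edge `e` when traversed in direction `b`. -/
def stepPair (ends : ε → V × V) (e : ε) (b : Bool) : V × V :=
  if b then ends e else (ends e).swap

/-- `S` is the edge set of a cycle: a closed walk using pairwise distinct edges. -/
def IsCyc (ends : ε → V × V) (S : Finset ε) : Prop :=
  ∃ (n : ℕ) (f : ℕ → ε) (d : ℕ → Bool), 0 < n ∧ Set.InjOn f (Set.Iio n) ∧
    S = (Finset.range n).image f ∧
    ∀ i < n, (stepPair ends (f i) (d i)).2 = (stepPair ends (f ((i + 1) % n)) (d ((i + 1) % n))).1

/-- The set of edges crossing the vertex subset `X`. -/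
def crossing (ends : ε → V × V) (X : Finset V) : Finset ε :=
  Finset.univ.filter fun e =>
    ((ends e).1 ∈ X ∧ (ends e).2 ∉ X) ∨ ((ends e).1 ∉ X ∧ (ends e).2 ∈ X)

/-- `S` is a (nonempty) cut: the set of edges crossing some vertex subset. -/
def IsCut (ends : ε → V × V) (S : Finset ε) : Prop :=
  S.Nonempty ∧ ∃ X : Finset V, S = crossing ends X

/-- A forest: a set of edges containing no cycle. -/
def Forest (ends : ε → V × V) (S : Finset ε) : Prop :=
  ∀ C ⊆ S, ¬ IsCyc ends C

/-- The (graphic) rank of an edge set `A`: the maximum size of a forest inside `A`. -/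
def grank (ends : ε → V × V) (A : Finset ε) : ℕ :=
  (A.powerset.filter (Forest ends)).sup Finset.card

/-- A maximal spanning forest. -/
def MaxForest (ends : ε → V × V) (F : Finset ε) : Prop :=
  Forest ends F ∧ ∀ F', Forest ends F' → F ⊆ F' → F' = F

/-- Edge `e ∈ F` is internally active: it is the smallest edge (for the labelling `σ`)
of its fundamental cut, the unique cut contained in `(E \ F) ∪ {e}`. -/
def IntAct (ends : ε → V × V) (σ : ε → ℕ) (F : Finset ε) (e : ε) : Prop :=
  e ∈ F ∧ ∃ U, IsCut ends U ∧ U ⊆ insert e (Finset.univ \ F) ∧ e ∈ U ∧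
    ∀ g ∈ U, σ e ≤ σ g

/-- Edge `e ∉ F` is externally active: it is the smallest edge (for the labelling `σ`)
of its fundamental cycle, the unique cycle contained in `F ∪ {e}`. -/
def ExtAct (ends : ε → V × V) (σ : ε → ℕ) (F : Finset ε) (e : ε) : Prop :=
  e ∉ F ∧ ∃ C, IsCyc ends C ∧ C ⊆ insert e F ∧ e ∈ C ∧ ∀ g ∈ C, σ e ≤ σ g

/-- One-step adjacency through an edge of `S`. -/
def Adj (ends : ε → V × V) (S : Finset ε) (u v : V) : Prop :=
  ∃ e ∈ S, ends e = (u, v) ∨ ends e = (v, u)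

/-- Reachability using edges of `S`. -/
def Reach (ends : ε → V × V) (S : Finset ε) : V → V → Prop :=
  Relation.ReflTransGen (Adj ends S)

/-- A spanning tree: a forest connecting every pair of vertices. -/
def SpanningTree (ends : ε → V × V) (T : Finset ε) : Prop :=
  Forest ends T ∧ ∀ u v : V, Reach ends T u v

/-- The ordered endpoints of `e` under the orientation `O` (`O e = true` means that
`e` agrees with the reference orientation given by `ends`). -/
def oEnds (ends : ε → V × V) (O : ε → Bool) (e : ε) : V × V :=
  if O e then ends e else (ends e).swap

/-- `S` is the edge set of a directed cycle of the orientation `O`. -/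
def IsDirCyc (ends : ε → V × V) (O : ε → Bool) (S : Finset ε) : Prop :=
  ∃ (n : ℕ) (f : ℕ → ε), 0 < n ∧ Set.InjOn f (Set.Iio n) ∧
    S = (Finset.range n).image f ∧
    ∀ i < n, (oEnds ends O (f i)).2 = (oEnds ends O (f ((i + 1) % n))).1

/-- `S` is a directed cut of the orientation `O`: a nonempty cut all of whose edges are
oriented from `X` to `Xᶜ`. -/
def IsDirCut (ends : ε → V × V) (O : ε → Bool) (S : Finset ε) : Prop :=
  S.Nonempty ∧ ∃ X : Finset V, S = crossing ends X ∧
    ∀ e ∈ S, (oEnds ends O e).1 ∈ X ∧ (oEnds ends O e).2 ∉ X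

/-- The corank-nullity (Whitney rank) expansion of the Tutte polynomial of the graph,
evaluated at `(x, y)`, with values in a commutative ring. -/
def gTutte {R : Type*} [CommRing R] (ends : ε → V × V) (x y : R) : R :=
  ∑ A ∈ (Finset.univ : Finset ε).powerset,
    (x - 1) ^ (grank ends Finset.univ - grank ends A) * (y - 1) ^ (A.card - grank ends A)

/-- The vertex at which the half-edge `(e, b)` is attached. -/
def hVtx (ends : ε → V × V) (i : ε × Bool) : V :=
  if i.2 then (ends i.1).1 else (ends i.1).2

/-- The involution `α` exchanging the two half-edges of each edge. -/
def hFlip (i : ε × Bool) : ε × Bool := (i.1, !i.2)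

/-- `σp` is a permutation of the half-edges whose orbits are exactly the stars of
half-edges at each vertex. -/
def IsVertexPerm (ends : ε → V × V) (σp : Equiv.Perm (ε × Bool)) : Prop :=
  (∀ i, hVtx ends (σp i) = hVtx ends i) ∧
  ∀ i j, hVtx ends i = hVtx ends j → ∃ k : ℕ, (⇑σp)^[k] i = j

/-- The motion operator of the rooted combinatorial map with respect to the spanning
tree `T`: `t(i) = σ(α(i))` if the edge of `i` is in `T`, and `t(i) = σ(i)` otherwise. -/
def motion (ends : ε → V × V) (σp : Equiv.Perm (ε × Bool)) (T : Finset ε)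
    (i : ε × Bool) : ε × Bool :=
  if i.1 ∈ T then σp (hFlip i) else σp i

/-!
The motion operator is `σ ∘ φ`, where `φ` flips the half-edges of tree edges and fixes the
others, so it is a permutation and it suffices to show that it has a single cycle.

The key step is that for a tree half-edge `j` the tour starting at `j` reaches `α j`. It moves on
to `σ (α j)` and then runs through the `σ`-orbit at the far endpoint of `j`; at each tree
half-edge `x` met there it first makes, by induction, the excursion from `x` back to `α x`. The
induction is on the far side of a tree half-edge (the vertices reached from its far endpoint
without crossing its edge), which for `x` is strictly smaller than for `j` as `T` has no cycle.

Hence the cycle of `h` is closed under `σ`, and under `α` on tree edges, so it contains every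
half-edge at every vertex that `T` connects to the root vertex: all of them.
-/

end TutteActivities

namespace TutteActivities

open Finset

section

variable {V ε : Type*} {ends : ε → V × V} {S T : Finset ε}

theorem stepPair_eq_or_eq_swap (e : ε) (d d' : Bool) :
    stepPair ends e d' = stepPair ends e d ∨ stepPair ends e d' = (stepPair ends e d).swap := by
  cases d <;> cases d' <;> simp [stepPair]

theorem adj_iff_exists_stepPair {u v : V} :
    Adj ends S u v ↔ ∃ e ∈ S, ∃ d, stepPair ends e d = (u, v) := by
  refine ⟨fun ⟨e, he, h⟩ => ⟨e, he, ?_⟩, fun ⟨e, he, d, h⟩ => ⟨e, he, ?_⟩⟩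
  · rcases h with h | h
    exacts [⟨true, h⟩, ⟨false, by simp [stepPair, h]⟩]
  · cases d
    · exact Or.inr (by simpa [stepPair] using congrArg Prod.swap h)
    · exact Or.inl h

theorem Reach.mono {S' : Finset ε} (hS : S ⊆ S') {u v : V} (h : Reach ends S u v) :
    Reach ends S' u v :=
  Relation.ReflTransGen.mono (fun _ _ ⟨e, he, hends⟩ => ⟨e, hS he, hends⟩) _ _ h

/-- As `d` varies, `(stepPair ends e d).1` runs through both endpoints of `e`. -/
theorem Reach.erase [DecidableEq ε] {e : ε} {a b : V} (h : Reach ends S a b)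
    (he : ∀ d, ¬ Reach ends S a (stepPair ends e d).1) : Reach ends (S.erase e) a b := by
  induction h with
  | refl => exact .refl
  | tail hab hbc ih =>
    obtain ⟨e', he', d, hstep⟩ := adj_iff_exists_stepPair.1 hbc
    have hne : e' ≠ e := by
      rintro rfl
      exact he d (by rwa [hstep])
    exact ih.tail (adj_iff_exists_stepPair.2 ⟨e', mem_erase.2 ⟨hne, he'⟩, d, hstep⟩)

def IsPath (ends : ε → V × V) (S : Finset ε) (n : ℕ) (vs : ℕ → V) (es : ℕ → ε) (ds : ℕ → Bool) :
    Prop :=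
  Set.InjOn vs (Set.Iic n) ∧ ∀ i < n, es i ∈ S ∧ stepPair ends (es i) (ds i) = (vs i, vs (i + 1))

theorem exists_isPath_of_reach [Nonempty ε] {v w : V} (h : Reach ends S v w) :
    ∃ n vs es ds, vs 0 = v ∧ vs n = w ∧ IsPath ends S n vs es ds := by
  induction h with
  | refl =>
    refine ⟨0, fun _ => v, fun _ => Classical.arbitrary ε, fun _ => true, rfl, rfl, ?_, by simp⟩
    intro a ha b hb _
    simp_all
  | @tail b c _ hbc ih =>
    obtain ⟨n, vs, es, ds, h0, hn, hinj, hstep⟩ := ih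
    by_cases hc : ∃ i ≤ n, vs i = c
    · -- `c` is already on the path: cut it there, keeping the vertices distinct
      obtain ⟨i, hi, rfl⟩ := hc
      exact ⟨i, vs, es, ds, h0, rfl, hinj.mono (Set.Iic_subset_Iic.2 hi),
        fun k hk => hstep k (hk.trans_le hi)⟩
    push Not at hc
    obtain ⟨e, he, d, hed⟩ := adj_iff_exists_stepPair.1 hbc
    refine ⟨n + 1, Function.update vs (n + 1) c, Function.update es n e,
      Function.update ds n d, ?_, by simp, ?_, ?_⟩
    · simpa using h0
    · intro a ha b hb hab
      simp only [Set.mem_Iic] at ha hb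
      rcases ha.lt_or_eq with ha | rfl <;> rcases hb.lt_or_eq with hb | rfl
      · simp only [Function.update_of_ne ha.ne, Function.update_of_ne hb.ne] at hab
        exact hinj (Nat.lt_succ_iff.1 ha) (Nat.lt_succ_iff.1 hb) hab
      · simp only [Function.update_of_ne ha.ne, Function.update_self] at hab
        exact absurd hab (hc a (Nat.lt_succ_iff.1 ha))
      · simp only [Function.update_of_ne hb.ne, Function.update_self] at hab
        exact absurd hab.symm (hc b (Nat.lt_succ_iff.1 hb))
      · rfl
    · intro i hi
      rcases (Nat.lt_succ_iff.1 hi).lt_or_eq with hi | rfl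
      · have hi' : i ≠ n + 1 := by omega
        simpa [Function.update_of_ne, hi', hi.ne] using hstep i hi
      · simpa [hn] using ⟨he, hed⟩

theorem IsPath.injOn_edges {n : ℕ} {vs : ℕ → V} {es : ℕ → ε} {ds : ℕ → Bool}
    (hp : IsPath ends S n vs es ds) : Set.InjOn es (Set.Iio n) := by
  intro i hi j hj hij
  simp only [Set.mem_Iio] at hi hj
  have hvs : ∀ {a b : ℕ}, a ≤ n → b ≤ n → vs a = vs b → a = b := fun ha hb h => hp.1 ha hb h
  have hj' := (hp.2 j hj).2
  rw [← hij] at hj'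
  rcases stepPair_eq_or_eq_swap (es i) (ds i) (ds j) with h | h <;>
    rw [hj', (hp.2 i hi).2] at h <;> simp only [Prod.mk.injEq, Prod.swap_prod_mk] at h
  · exact (hvs hj.le hi.le h.1).symm
  · have := hvs hj.le hi h.1
    have := hvs hj hi.le h.2
    omega

theorem IsPath.exists_isCyc [DecidableEq ε] {n : ℕ} {vs : ℕ → V} {es : ℕ → ε} {ds : ℕ → Bool}
    (hp : IsPath ends S n vs es ds) {e : ε} (he : e ∉ S) {d : Bool}
    (hd : stepPair ends e d = (vs n, vs 0)) : ∃ C ⊆ insert e S, IsCyc ends C := by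
  set f := Function.update es n e
  set g := Function.update ds n d
  have hstep : ∀ k ≤ n, stepPair ends (f k) (g k) = (vs k, vs ((k + 1) % (n + 1))) := by
    intro k hk
    rcases hk.lt_or_eq with hk | rfl
    · simp [f, g, hk.ne, Nat.mod_eq_of_lt (Nat.succ_lt_succ hk), (hp.2 k hk).2]
    · simp [f, g, hd]
  have hfS : ∀ k < n, f k ∈ S := fun k hk => by simpa [f, hk.ne] using (hp.2 k hk).1
  refine ⟨(range (n + 1)).image f, ?_, n + 1, f, g, n.succ_pos, ?_, rfl, ?_⟩
  · intro x hx
    obtain ⟨k, hk, rfl⟩ := mem_image.1 hx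
    rcases (Nat.lt_succ_iff.1 (mem_range.1 hk)).lt_or_eq with hk | rfl
    · exact mem_insert_of_mem (hfS k hk)
    · simp [f]
  · intro a ha b hb hab
    simp only [Set.mem_Iio, Nat.lt_succ_iff] at ha hb
    rcases ha.lt_or_eq with ha | rfl <;> rcases hb.lt_or_eq with hb | rfl
    · exact hp.injOn_edges ha hb (by simpa [f, ha.ne, hb.ne] using hab)
    · exact absurd (hab ▸ hfS a ha) (by simpa [f] using he)
    · exact absurd (hab.symm ▸ hfS b hb) (by simpa [f] using he)
    · rfl
  · intro i hi
    rw [hstep i (Nat.lt_succ_iff.1 hi), hstep _ (Nat.lt_succ_iff.1 (Nat.mod_lt _ n.succ_pos))]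

theorem Forest.not_reach_erase [DecidableEq ε] (hT : Forest ends T) {e : ε} (he : e ∈ T)
    (d : Bool) : ¬ Reach ends (T.erase e) (stepPair ends e d).2 (stepPair ends e d).1 := by
  intro hr
  have : Nonempty ε := ⟨e⟩
  obtain ⟨n, vs, es, ds, h0, hn, hp⟩ := exists_isPath_of_reach hr
  obtain ⟨C, hC, hcyc⟩ := hp.exists_isCyc (T.notMem_erase e) (d := d) (by rw [h0, hn])
  exact hT C (by rwa [insert_erase he] at hC) hcyc

theorem stepPair_halfEdge (x : ε × Bool) :
    stepPair ends x.1 x.2 = (hVtx ends x, hVtx ends (hFlip x)) := by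
  obtain ⟨e, _ | _⟩ := x <;> rfl

@[simp]
theorem hFlip_hFlip (x : ε × Bool) : hFlip (hFlip x) = x := by
  simp [hFlip]

theorem eq_or_eq_hFlip_of_fst_eq {x j : ε × Bool} (h : x.1 = j.1) : x = j ∨ x = hFlip j := by
  obtain ⟨e, b⟩ := x
  obtain ⟨e', b'⟩ := j
  cases b <;> cases b' <;> simp_all [hFlip]

theorem adj_hVtx_hFlip {x : ε × Bool} (hx : x.1 ∈ S) :
    Adj ends S (hVtx ends x) (hVtx ends (hFlip x)) :=
  adj_iff_exists_stepPair.2 ⟨x.1, hx, x.2, stepPair_halfEdge x⟩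

theorem Forest.not_reach_erase_hVtx [DecidableEq ε] (hT : Forest ends T) {x : ε × Bool}
    (hx : x.1 ∈ T) : ¬ Reach ends (T.erase x.1) (hVtx ends (hFlip x)) (hVtx ends x) := by
  simpa [stepPair_halfEdge] using hT.not_reach_erase hx x.2

theorem Forest.hVtx_ne_hVtx_hFlip [DecidableEq ε] (hT : Forest ends T) {x : ε × Bool}
    (hx : x.1 ∈ T) : hVtx ends x ≠ hVtx ends (hFlip x) :=
  fun h => hT.not_reach_erase_hVtx hx (h ▸ .refl)

theorem Forest.fst_ne_of_hVtx_eq [DecidableEq ε] (hT : Forest ends T) {j x : ε × Bool}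
    (hj : j.1 ∈ T) (hvx : hVtx ends x = hVtx ends (hFlip j)) (hxj : x ≠ hFlip j) : x.1 ≠ j.1 := by
  intro h
  rcases eq_or_eq_hFlip_of_fst_eq h with rfl | rfl
  exacts [hT.hVtx_ne_hVtx_hFlip hj hvx, hxj rfl]

def farSide [Fintype V] [DecidableEq ε] (ends : ε → V × V) (T : Finset ε) (x : ε × Bool) :
    Finset V :=
  univ.filter fun y => Reach ends (T.erase x.1) (hVtx ends (hFlip x)) y

theorem farSide_ssubset [Fintype V] [DecidableEq ε] (hT : Forest ends T) {j x : ε × Bool}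
    (hj : j.1 ∈ T) (hx : x.1 ∈ T) (hxj : x.1 ≠ j.1) (hvx : hVtx ends x = hVtx ends (hFlip j)) :
    farSide ends T x ⊂ farSide ends T j := by
  have hnw : ¬ Reach ends (T.erase x.1) (hVtx ends (hFlip x)) (hVtx ends (hFlip j)) :=
    hvx ▸ hT.not_reach_erase_hVtx hx
  have hnv : ¬ Reach ends (T.erase x.1) (hVtx ends (hFlip x)) (hVtx ends j) :=
    fun h => hnw (h.tail (adj_hVtx_hFlip (mem_erase.2 ⟨hxj.symm, hj⟩)))
  have hwu : Reach ends (T.erase j.1) (hVtx ends (hFlip j)) (hVtx ends (hFlip x)) :=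
    hvx ▸ .single (adj_hVtx_hFlip (mem_erase.2 ⟨hxj, hx⟩))
  refine (ssubset_iff_of_subset fun y hy => ?_).2
    ⟨hVtx ends (hFlip j), by simpa [farSide] using .refl, by simpa [farSide] using hnw⟩
  simp only [farSide, mem_filter, mem_univ, true_and] at hy ⊢
  refine hwu.trans ((hy.erase fun d => ?_).mono (erase_subset_erase _ (erase_subset _ _)))
  rcases stepPair_eq_or_eq_swap j.1 j.2 d with h | h <;> rw [h, stepPair_halfEdge]
  exacts [hnv, hnw]

theorem IsVertexPerm.hVtx_iterate {σp : Equiv.Perm (ε × Bool)} (hσp : IsVertexPerm ends σp)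
    (k : ℕ) (i : ε × Bool) : hVtx ends ((⇑σp)^[k] i) = hVtx ends i := by
  induction k with
  | zero => rfl
  | succ k ih => rw [Function.iterate_succ_apply', hσp.1, ih]

section Motion

variable [DecidableEq ε] {σp : Equiv.Perm (ε × Bool)}

def treeFlip (T : Finset ε) : Equiv.Perm (ε × Bool) :=
  Function.Involutive.toPerm (fun i => if i.1 ∈ T then hFlip i else i) fun i => by
    by_cases hi : i.1 ∈ T <;> simp [hi, hFlip]

theorem treeFlip_apply (i : ε × Bool) : treeFlip T i = if i.1 ∈ T then hFlip i else i := rfl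

def motionPerm (σp : Equiv.Perm (ε × Bool)) (T : Finset ε) : Equiv.Perm (ε × Bool) :=
  (treeFlip T).trans σp

theorem coe_motionPerm (ends : ε → V × V) : ⇑(motionPerm σp T) = motion ends σp T := by
  funext i
  by_cases hi : i.1 ∈ T <;> simp [motionPerm, treeFlip_apply, motion, hi]

theorem motionPerm_apply_of_mem {i : ε × Bool} (hi : i.1 ∈ T) :
    motionPerm σp T i = σp (hFlip i) := by
  simp [motionPerm, treeFlip_apply, hi]

theorem motionPerm_apply_of_notMem {i : ε × Bool} (hi : i.1 ∉ T) : motionPerm σp T i = σp i := by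
  simp [motionPerm, treeFlip_apply, hi]

theorem motionPerm_hFlip {x : ε × Bool} (hx : x.1 ∈ T) : motionPerm σp T (hFlip x) = σp x := by
  rw [motionPerm_apply_of_mem (show (hFlip x).1 ∈ T from hx), hFlip_hFlip]

open Equiv.Perm in
theorem sameCycle_apply_of_sameCycle_hFlip {x : ε × Bool}
    (hx : x.1 ∈ T → (motionPerm σp T).SameCycle x (hFlip x)) :
    (motionPerm σp T).SameCycle x (σp x) := by
  by_cases hxT : x.1 ∈ T
  · rw [← motionPerm_hFlip hxT]
    exact sameCycle_apply_right.2 (hx hxT)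
  · rw [← motionPerm_apply_of_notMem hxT]
    exact sameCycle_apply_right.2 .rfl

theorem IsVertexPerm.sameCycle_hFlip [Fintype V] (hσp : IsVertexPerm ends σp)
    (hT : Forest ends T) {j : ε × Bool} (hj : j.1 ∈ T) :
    (motionPerm σp T).SameCycle j (hFlip j) := by
  induction hn : (farSide ends T j).card using Nat.strong_induction_on generalizing j with
  | _ n ih =>
  set t := motionPerm σp T
  have hw : ∀ p, hVtx ends ((⇑σp)^[p] (t j)) = hVtx ends (hFlip j) := fun p => by
    rw [hσp.hVtx_iterate, motionPerm_apply_of_mem hj, hσp.1]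
  -- From `t j = σ (α j)` the tour follows the `σ`-orbit at the far endpoint of `j` up to `α j`.
  have key : ∀ p, t.SameCycle j (hFlip j) ∨ t.SameCycle j ((⇑σp)^[p] (t j)) := by
    intro p
    induction p with
    | zero => exact .inr (Equiv.Perm.sameCycle_apply_right.2 .rfl)
    | succ p ihp =>
      rcases ihp with h | h
      · exact .inl h
      set x := (⇑σp)^[p] (t j)
      have hwx : hVtx ends x = hVtx ends (hFlip j) := hw p
      by_cases hxj : x = hFlip j
      · exact .inl (hxj ▸ h)
      right
      rw [Function.iterate_succ_apply']
      refine h.trans (sameCycle_apply_of_sameCycle_hFlip fun hxT => ?_)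
      have hsub := farSide_ssubset hT hj hxT (hT.fst_ne_of_hVtx_eq hj hwx hxj) hwx
      exact ih _ (hn ▸ card_lt_card hsub) hxT rfl
  obtain ⟨k, hk⟩ := hσp.2 _ _ (hw 0)
  exact (key k).elim id (hk ▸ ·)

theorem IsVertexPerm.sameCycle_of_hVtx_eq [Fintype V] (hσp : IsVertexPerm ends σp)
    (hT : Forest ends T) {i j : ε × Bool} (h : hVtx ends i = hVtx ends j) :
    (motionPerm σp T).SameCycle i j := by
  obtain ⟨k, rfl⟩ := hσp.2 i j h
  clear h
  induction k with
  | zero => exact .rfl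
  | succ k ih =>
    rw [Function.iterate_succ_apply']
    exact ih.trans (sameCycle_apply_of_sameCycle_hFlip (hσp.sameCycle_hFlip hT ·))

theorem IsVertexPerm.sameCycle_of_reach [Fintype V] (hσp : IsVertexPerm ends σp)
    (hT : Forest ends T) {i j : ε × Bool} {v : V} (h : Reach ends T (hVtx ends i) v)
    (hj : hVtx ends j = v) : (motionPerm σp T).SameCycle i j := by
  induction h generalizing j with
  | refl => exact hσp.sameCycle_of_hVtx_eq hT hj.symm
  | tail _ hbc ih =>
    obtain ⟨e, he, d, hed⟩ := adj_iff_exists_stepPair.1 hbc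
    obtain ⟨hb, hc⟩ := Prod.mk.inj ((stepPair_halfEdge (e, d)).symm.trans hed)
    exact (ih hb).trans ((hσp.sameCycle_hFlip hT he).trans
      (hσp.sameCycle_of_hVtx_eq hT (hc.trans hj.symm)))

theorem IsVertexPerm.isCycleOn_motionPerm [Fintype V] (hσp : IsVertexPerm ends σp)
    (hT : SpanningTree ends T) : (motionPerm σp T).IsCycleOn Set.univ :=
  ⟨Set.bijOn_univ.2 (Equiv.bijective _),
    fun _ _ _ _ => hσp.sameCycle_of_reach hT.1 (hT.2 _ _) rfl⟩

end Motion

end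

variable {V ε : Type*} [Fintype V] [DecidableEq V] [Fintype ε] [DecidableEq ε]

theorem motion_tour_visits_all_halfEdges_general
    (ends : ε → V × V) (σp : Equiv.Perm (ε × Bool)) (hσp : IsVertexPerm ends σp)
    (T : Finset ε) (hT : SpanningTree ends T) (h : ε × Bool) :
    (∀ j : ε × Bool, ∃ k < Fintype.card (ε × Bool), (motion ends σp T)^[k] h = j) ∧
    (motion ends σp T)^[Fintype.card (ε × Bool)] h = h := by
  have hcyc : (motionPerm σp T).IsCycleOn (univ : Finset (ε × Bool)) := by
    simpa using hσp.isCycleOn_motionPerm hT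
  simp only [← coe_motionPerm ends, Equiv.Perm.iterate_eq_pow]
  exact ⟨fun j => by simpa using hcyc.exists_pow_eq (mem_univ h) (mem_univ j),
    by simpa using hcyc.pow_card_apply (mem_univ h)⟩

/-- For a rooted combinatorial map of a connected graph and a spanning tree `T`, the
motion operator generates a tour that visits every half-edge exactly once before
returning to the root half-edge `h`. -/
theorem motion_tour_visits_all_halfEdges
    (ends : ε → V × V) (σp : Equiv.Perm (ε × Bool)) (hσp : IsVertexPerm ends σp)
    (hconn : ∀ u v : V, Reach ends Finset.univ u v)
    (T : Finset ε) (hT : SpanningTree ends T) (h : ε × Bool) :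
    (∀ j : ε × Bool, ∃ k < Fintype.card (ε × Bool), (motion ends σp T)^[k] h = j) ∧
    (motion ends σp T)^[Fintype.card (ε × Bool)] h = h :=
  motion_tour_visits_all_halfEdges_general ends σp hσp T hT h

end TutteActivities
end
end

section
/- In any orientation O of a graph G, every edge belongs to a directed cut or to a directed cycle, but not both. Consequently, for each orientation, the sets of cut-active and cycle-active edges are disjoint. -/
/-!
Let the edge `e` run from `u` to `v`. If `v` reaches `u` by a directed walk, a walk from `v` to
`u` without repeated vertices closes up with `e` into a directed cycle. Otherwise the set `X` of
vertices from which `u` can be reached contains `u` but not `v`, and no edge enters it, so the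
edges crossing `X` form a directed cut through `e`. Both cannot happen at once: a directed cycle
leaving `X` through `e` must re-enter `X`, along an edge of the cut pointing the wrong way.
-/

noncomputable section
attribute [local instance] Classical.propDecidable

namespace TutteActivities

open Function Relation

section Orientation

variable {V ε : Type*} (ends : ε → V × V) (O : ε → Bool)

def DirAdj (a b : V) : Prop := ∃ e, oEnds ends O e = (a, b)

def IsDirWalk (n : ℕ) (p : ℕ → V) (f : ℕ → ε) : Prop :=
  ∀ i < n, oEnds ends O (f i) = (p i, p (i + 1))

variable {ends O}

theorem IsDirWalk.mono {n k : ℕ} {p : ℕ → V} {f : ℕ → ε} (hw : IsDirWalk ends O n p f)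
    (hk : k ≤ n) : IsDirWalk ends O k p f :=
  fun i hi => hw i (hi.trans_le hk)

theorem IsDirWalk.snoc [DecidableEq ε] {n : ℕ} {p : ℕ → V} {f : ℕ → ε} {c : V} {g : ε}
    (hw : IsDirWalk ends O n p f) (hg : oEnds ends O g = (p n, c)) :
    IsDirWalk ends O (n + 1) (update p (n + 1) c) (update f n g) := by
  intro i hi
  rcases (Nat.lt_succ_iff.mp hi).lt_or_eq with hi | rfl
  · rw [update_of_ne hi.ne, update_of_ne (by omega), update_of_ne (by omega), hw i hi]
  · rw [update_self, update_self, update_of_ne (by omega), hg]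

theorem exists_isDirWalk_injOn [Nonempty ε] {a b : V} (h : ReflTransGen (DirAdj ends O) a b) :
    ∃ n p f, IsDirWalk ends O n p f ∧ p 0 = a ∧ p n = b ∧ Set.InjOn p (Set.Iic n) := by
  induction h with
  | refl =>
    exact ⟨0, fun _ => a, fun _ => Classical.arbitrary ε, fun _ h => absurd h (Nat.not_lt_zero _),
      rfl, rfl, fun i hi j hj _ => (Nat.le_zero.mp hi).trans (Nat.le_zero.mp hj).symm⟩
  | @tail b c _ hbc ih =>
    obtain ⟨n, p, f, hw, hp0, hpn, hinj⟩ := ih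
    obtain ⟨g, hg⟩ := hbc
    by_cases hc : ∃ k ≤ n, p k = c
    · -- the walk already visits `c`: cut it short there
      obtain ⟨k, hk, hpk⟩ := hc
      exact ⟨k, p, f, hw.mono hk, hp0, hpk, hinj.mono (Set.Iic_subset_Iic.mpr hk)⟩
    · refine ⟨n + 1, update p (n + 1) c, update f n g, hw.snoc (hpn ▸ hg), ?_, update_self .., ?_⟩
      · rw [update_of_ne (by omega), hp0]
      · have hne : ∀ k ∈ Set.Iic n, k ≠ n + 1 := fun k hk => (Nat.lt_succ_of_le hk).ne
        rw [show Set.Iic (n + 1) = insert (n + 1) (Set.Iic n) from Order.Iic_succ n,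
          Set.injOn_insert (fun h => hne _ h rfl), update_self]
        refine ⟨hinj.congr fun k hk => (update_of_ne (hne k hk) ..).symm, ?_⟩
        rintro ⟨k, hk, hkc⟩
        exact hc ⟨k, hk, by rwa [update_of_ne (hne k hk)] at hkc⟩

theorem isDirCyc_of_isDirWalk [DecidableEq ε] {n : ℕ} {p : ℕ → V} {f : ℕ → ε} (hn : 0 < n)
    (hw : IsDirWalk ends O n p f) (hclosed : p n = p 0) (hinj : Set.InjOn p (Set.Iio n)) :
    IsDirCyc ends O ((Finset.range n).image f) := by
  refine ⟨n, f, hn, fun i hi j hj hij => hinj hi hj ?_, rfl, fun i hi => ?_⟩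
  · simpa [hw i hi, hw j hj] using congrArg (fun g => (oEnds ends O g).1) hij
  · rw [hw i hi, hw _ (Nat.mod_lt _ hn)]
    rcases Nat.lt_or_ge (i + 1) n with h | h
    · rw [Nat.mod_eq_of_lt h]
    · rw [show i + 1 = n by omega, Nat.mod_self, hclosed]

theorem exists_isDirCyc_mem [DecidableEq ε] {e : ε} {u v : V} (he : oEnds ends O e = (u, v))
    (hvu : ReflTransGen (DirAdj ends O) v u) : ∃ S, IsDirCyc ends O S ∧ e ∈ S := by
  have : Nonempty ε := ⟨e⟩
  obtain ⟨n, p, f, hw, hp0, hpn, hinj⟩ := exists_isDirWalk_injOn hvu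
  refine ⟨_, isDirCyc_of_isDirWalk (n := n + 1) n.succ_pos (hw.snoc (c := v) (hpn ▸ he)) ?_ ?_,
    Finset.mem_image.mpr ⟨n, Finset.self_mem_range_succ n, update_self ..⟩⟩
  · rw [update_self, update_of_ne n.succ_ne_zero.symm, hp0]
  · rw [Set.Iio_add_one_eq_Iic]
    exact hinj.congr fun k hk => (update_of_ne (Nat.lt_succ_of_le hk).ne ..).symm

theorem mem_crossing_iff_oEnds [DecidableEq V] [Fintype ε] {X : Finset V} {g : ε} :
    g ∈ crossing ends X ↔
      ((oEnds ends O g).1 ∈ X ∧ (oEnds ends O g).2 ∉ X) ∨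
        ((oEnds ends O g).1 ∉ X ∧ (oEnds ends O g).2 ∈ X) := by
  unfold crossing oEnds
  cases O g <;> simp; tauto

theorem exists_isDirCut_mem [Fintype V] [DecidableEq V] [Fintype ε] {e : ε} {u v : V}
    (he : oEnds ends O e = (u, v)) (hvu : ¬ ReflTransGen (DirAdj ends O) v u) :
    ∃ S, IsDirCut ends O S ∧ e ∈ S := by
  set X := Finset.univ.filter fun w => ReflTransGen (DirAdj ends O) w u
  have heX : e ∈ crossing ends X :=
    (mem_crossing_iff_oEnds (O := O)).mpr (Or.inl (by simp [X, he, hvu, ReflTransGen.refl]))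
  refine ⟨crossing ends X, ⟨⟨e, heX⟩, X, rfl, fun g hg => ?_⟩, heX⟩
  refine (mem_crossing_iff_oEnds.mp hg).resolve_right fun ⟨hg1, hg2⟩ => hg1 ?_
  simp only [X, Finset.mem_filter, Finset.mem_univ, true_and] at hg1 hg2 ⊢
  exact hg2.head ⟨g, Prod.mk.eta.symm⟩

theorem IsDirCyc.exists_mem_enters [DecidableEq ε] {C : Finset ε} (hC : IsDirCyc ends O C)
    {X : Set V} {e : ε} (he : e ∈ C) (heX : (oEnds ends O e).1 ∈ X ∧ (oEnds ends O e).2 ∉ X) :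
    ∃ g ∈ C, (oEnds ends O g).1 ∉ X ∧ (oEnds ends O g).2 ∈ X := by
  obtain ⟨n, f, hn, -, rfl, hchain⟩ := hC
  obtain ⟨i, hi, rfl⟩ := Finset.mem_image.mp he
  rw [Finset.mem_range] at hi
  set p : ℕ → V := fun k => (oEnds ends O (f (k % n))).1
  have hstep : ∀ k, (oEnds ends O (f (k % n))).2 = p (k + 1) := fun k => by
    simp only [p, hchain _ (Nat.mod_lt _ hn), Nat.mod_add_mod]
  obtain ⟨k, hk, hk1⟩ := Nat.exists_not_and_succ_of_not_zero_of_exists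
    (p := fun k => p (i + 1 + k) ∈ X) (by simpa [← hstep, Nat.mod_eq_of_lt hi] using heX.2)
    ⟨n - 1, by simpa [p, show i + 1 + (n - 1) = i + n by omega, Nat.mod_eq_of_lt hi] using heX.1⟩
  exact ⟨f ((i + 1 + k) % n), Finset.mem_image_of_mem _ (Finset.mem_range.mpr (Nat.mod_lt _ hn)),
    hk, by rwa [hstep]⟩

theorem exists_isDirCut_or_isDirCyc [Fintype V] [DecidableEq V] [Fintype ε] [DecidableEq ε]
    (e : ε) : (∃ S, IsDirCut ends O S ∧ e ∈ S) ∨ (∃ S, IsDirCyc ends O S ∧ e ∈ S) := by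
  by_cases hvu : ReflTransGen (DirAdj ends O) (oEnds ends O e).2 (oEnds ends O e).1
  · exact Or.inr (exists_isDirCyc_mem Prod.mk.eta.symm hvu)
  · exact Or.inl (exists_isDirCut_mem Prod.mk.eta.symm hvu)

theorem not_isDirCut_and_isDirCyc [DecidableEq V] [Fintype ε] [DecidableEq ε] (e : ε) :
    ¬ ((∃ S, IsDirCut ends O S ∧ e ∈ S) ∧ (∃ S, IsDirCyc ends O S ∧ e ∈ S)) := by
  rintro ⟨⟨S, ⟨-, X, rfl, hout⟩, heS⟩, C, hC, heC⟩
  obtain ⟨g, -, hg1, hg2⟩ := hC.exists_mem_enters (X := X) heC (hout e heS)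
  exact hg1 (hout g (mem_crossing_iff_oEnds.mpr (Or.inr ⟨hg1, hg2⟩))).1

end Orientation

variable {V ε : Type*} [Fintype V] [DecidableEq V] [Fintype ε] [DecidableEq ε]

/-- In any orientation, every edge lies in a directed cut or in a directed cycle but not
both; consequently the sets of cut-active and cycle-active edges are disjoint. -/
theorem edge_dirCut_xor_dirCyc (ends : ε → V × V) (O : ε → Bool) :
    (∀ e : ε, Xor' (∃ S, IsDirCut ends O S ∧ e ∈ S) (∃ S, IsDirCyc ends O S ∧ e ∈ S)) ∧
    (∀ σ : ε → ℕ, Function.Injective σ → ∀ e : ε,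
      ¬ ((∃ S, IsDirCut ends O S ∧ e ∈ S ∧ ∀ g ∈ S, σ e ≤ σ g) ∧
         (∃ S, IsDirCyc ends O S ∧ e ∈ S ∧ ∀ g ∈ S, σ e ≤ σ g))) := by
  refine ⟨fun e => (xor_iff_or_and_not_and _ _).mpr
    ⟨exists_isDirCut_or_isDirCyc e, not_isDirCut_and_isDirCyc e⟩, ?_⟩
  rintro σ - e ⟨⟨S, hS, heS, -⟩, C, hC, heC, -⟩
  exact not_isDirCut_and_isDirCyc e ⟨⟨S, hS, heS⟩, C, hC, heC⟩

end TutteActivities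
end
end

section
/- Let M be a matroid on a totally ordered ground set. The poset on bases of M, defined as the transitive closure of the relation B₁ ← B₂ whenever B₂ = (B₁∖{e})∪{f} with e the minimum element of the fundamental circuit Z_{B₁}(f) (external pivoting), becomes a lattice after adjoining a bottom element 0̂. -/
noncomputable section
attribute [local instance] Classical.propDecidable

namespace TutteActivities

variable {α : Type*} [DecidableEq α]

/-- `ℬ` is the family of bases of a matroid on ground set `E`:
nonempty, contained in `E`, and satisfying the basis-exchange axiom. -/
def IsMatroidOn (E : Finset α) (ℬ : Finset (Finset α)) : Prop :=
  ℬ.Nonempty ∧ (∀ B ∈ ℬ, B ⊆ E) ∧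
    ∀ B₁ ∈ ℬ, ∀ B₂ ∈ ℬ, ∀ e ∈ B₁ \ B₂, ∃ f ∈ B₂ \ B₁, insert f (B₁.erase e) ∈ ℬ

/-- A set is independent if it is contained in a basis. -/
def Indep (ℬ : Finset (Finset α)) (S : Finset α) : Prop := ∃ B ∈ ℬ, S ⊆ B

/-- A circuit is a minimal dependent subset of the ground set. -/
def Circuit (E : Finset α) (ℬ : Finset (Finset α)) (C : Finset α) : Prop :=
  C ⊆ E ∧ ¬ Indep ℬ C ∧ ∀ D ⊂ C, Indep ℬ D

/-- A cocircuit is a minimal subset of the ground set meeting every basis. -/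
def Cocircuit (E : Finset α) (ℬ : Finset (Finset α)) (C : Finset α) : Prop :=
  C ⊆ E ∧ (∀ B ∈ ℬ, (B ∩ C).Nonempty) ∧ ∀ D ⊂ C, ∃ B ∈ ℬ, B ∩ D = ∅

/-- The rank of a set `A`: the largest size of the intersection of a basis with `A`. -/
def rank (ℬ : Finset (Finset α)) (A : Finset α) : ℕ := ℬ.sup fun B => (B ∩ A).card

/-- `e` is the minimum element of `C` with respect to the order given by labels `σ`. -/
def IsMinOf (σ : α → ℕ) (e : α) (C : Finset α) : Prop := e ∈ C ∧ ∀ g ∈ C, σ e ≤ σ g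

/-- `f ∉ B` is externally active: `f` is the minimum of the fundamental circuit of `f`,
i.e. of a circuit contained in `B ∪ {f}`. -/
def ExtActive (E : Finset α) (ℬ : Finset (Finset α)) (σ : α → ℕ) (B : Finset α) (f : α) :
    Prop :=
  f ∉ B ∧ ∃ C, Circuit E ℬ C ∧ C ⊆ insert f B ∧ IsMinOf σ f C

/-- `e ∈ B` is internally active: `e` is the minimum of the fundamental cocircuit of `e`,
i.e. of a cocircuit contained in `(E \ B) ∪ {e}`. -/
def IntActive (E : Finset α) (ℬ : Finset (Finset α)) (σ : α → ℕ) (B : Finset α) (e : α) :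
    Prop :=
  e ∈ B ∧ ∃ C, Cocircuit E ℬ C ∧ C ⊆ insert e (E \ B) ∧ IsMinOf σ e C

/-- The set of externally active elements of a basis `B`. -/
def extSet (E : Finset α) (ℬ : Finset (Finset α)) (σ : α → ℕ) (B : Finset α) : Finset α :=
  E.filter (ExtActive E ℬ σ B)

/-- The set of internally active elements of a basis `B`. -/
def intSet (E : Finset α) (ℬ : Finset (Finset α)) (σ : α → ℕ) (B : Finset α) : Finset α :=
  E.filter (IntActive E ℬ σ B)

/-- The Tutte polynomial via Whitney's corank-nullity expansion. -/
def tutte (E : Finset α) (ℬ : Finset (Finset α)) (x y : ℤ) : ℤ :=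
  ∑ A ∈ E.powerset, (x - 1) ^ (rank ℬ E - rank ℬ A) * (y - 1) ^ (A.card - rank ℬ A)

/-- Externally active pivoting: `B₁ ← B₂` when `B₂ = (B₁ \ {e}) ∪ {f}` with `e` the
minimum element of the fundamental circuit `Z_{B₁}(f)`. -/
def extPivot (E : Finset α) (ℬ : Finset (Finset α)) (σ : α → ℕ)
    (B₁ B₂ : Finset α) : Prop :=
  B₁ ∈ ℬ ∧ B₂ ∈ ℬ ∧ ∃ e f, e ∈ B₁ ∧ f ∉ B₁ ∧ B₂ = insert f (B₁.erase e) ∧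
    ∃ C, Circuit E ℬ C ∧ C ⊆ insert f B₁ ∧ f ∈ C ∧ e ∈ C ∧ IsMinOf σ e C

/-- Internally active pivoting: `B₁ ←* B₂` when `B₁ = (B₂ \ {e}) ∪ {f}` with `e` the
minimum element of the fundamental cocircuit `U_{B₁}(f)`. -/
def intPivot (E : Finset α) (ℬ : Finset (Finset α)) (σ : α → ℕ)
    (B₁ B₂ : Finset α) : Prop :=
  B₁ ∈ ℬ ∧ B₂ ∈ ℬ ∧ ∃ e f, e ∈ B₂ ∧ f ∉ B₂ ∧ B₁ = insert f (B₂.erase e) ∧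
    ∃ C, Cocircuit E ℬ C ∧ C ⊆ insert f (E \ B₁) ∧ f ∈ C ∧ e ∈ C ∧ IsMinOf σ e C
/-- The order on `Option (Finset α)` obtained from a relation on bases by taking the
reflexive-transitive closure and adjoining `none` as a bottom element `0̂`. -/
def withBotLe (r : Finset α → Finset α → Prop) :
    Option (Finset α) → Option (Finset α) → Prop
  | none, _ => True
  | some _, none => False
  | some a, some b => Relation.ReflTransGen r a b

/-!
Following Las Vergnas, compare bases through their sets `EP(B)` (`extPassive`) of externally
passive elements (outside `B` and not externally active): `B ≤ B'` in the external order iff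
`EP(B') ⊆ EP(B)`. An externally active pivot `B ← B'` makes `EP` strictly smaller, which gives
antisymmetry; conversely, if `EP(B') ⊆ EP(B)` and `B ≠ B'`, pivoting `B` on the `σ`-largest
element of `B ∆ B'` keeps `EP(B') ⊆ EP(·)`, so induction on `|EP(B)|` reaches `B'`.
Both directions rest on reading activity through the closure operator: `g ∉ B` is externally
active iff `g` lies in the closure of the elements of `B` above `g`.

The join of `B₁` and `B₂` is a basis with the fewest passive elements among those avoiding
`S = EP(B₁) ∩ EP(B₂)`: a passive element outside `S` would allow a pivot staying in that
family, so its passive set lies in `S`, and it lies above every basis whose passive set does.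
With `0̂` adjoined the poset is finite with a bottom and binary joins, hence a lattice.
-/

section Order

variable {β : Type*}

def HasJoinsOn (le : β → β → Prop) (P : Finset β) : Prop :=
  ∀ a ∈ P, ∀ b ∈ P, ∃ j ∈ P, le a j ∧ le b j ∧ ∀ c ∈ P, le a c → le b c → le j c

theorem HasJoinsOn.exists_lub {le : β → β → Prop} [IsTrans β le] {P : Finset β}
    (hP : HasJoinsOn le P) {bot : β} (hbot : bot ∈ P) (hbot_le : ∀ c ∈ P, le bot c)
    {Q : Finset β} (hQ : Q ⊆ P) :
    ∃ s ∈ P, (∀ x ∈ Q, le x s) ∧ ∀ c ∈ P, (∀ x ∈ Q, le x c) → le s c := by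
  induction Q using Finset.induction_on with
  | empty => exact ⟨bot, hbot, by simp, fun c hc _ => hbot_le c hc⟩
  | insert x Q _ ih =>
    obtain ⟨s, hs, hQs, hs_le⟩ := ih ((Finset.subset_insert x Q).trans hQ)
    obtain ⟨j, hj, hxj, hsj, hj_le⟩ := hP x (hQ (Finset.mem_insert_self x Q)) s hs
    simp only [Finset.forall_mem_insert]
    exact ⟨j, hj, ⟨hxj, fun y hy => trans_of le (hQs y hy) hsj⟩,
      fun c hc hQc => hj_le c hc hQc.1 (hs_le c hc hQc.2)⟩

/-- The meet of `a` and `b` is the join of all their common lower bounds. -/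
theorem HasJoinsOn.hasJoinsOn_flip {le : β → β → Prop} [IsTrans β le] {P : Finset β}
    (hP : HasJoinsOn le P) {bot : β} (hbot : bot ∈ P) (hbot_le : ∀ c ∈ P, le bot c) :
    HasJoinsOn (flip le) P := by
  intro a ha b hb
  obtain ⟨m, hm, hlow, hm_le⟩ := hP.exists_lub hbot hbot_le
    (Finset.filter_subset (fun x => le x a ∧ le x b) P)
  exact ⟨m, hm, hm_le a ha fun x hx => (Finset.mem_filter.1 hx).2.1,
    hm_le b hb fun x hx => (Finset.mem_filter.1 hx).2.2,
    fun c hc hca hcb => hlow c (Finset.mem_filter.2 ⟨hc, hca, hcb⟩)⟩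

theorem eq_of_reflTransGen_of_reflTransGen {γ : Type*} [Preorder γ] {r : β → β → Prop}
    (μ : β → γ) (hμ : ∀ a b, r a b → μ b < μ a) {a b : β}
    (hab : Relation.ReflTransGen r a b) (hba : Relation.ReflTransGen r b a) : a = b := by
  have key : ∀ {a b}, Relation.ReflTransGen r a b → a = b ∨ μ b < μ a := fun h => by
    induction h with
    | refl => exact .inl rfl
    | tail _ hbc ih => exact .inr (ih.elim (· ▸ hμ _ _ hbc) (hμ _ _ hbc).trans)
  obtain rfl | hlt := key hab
  · rfl
  obtain rfl | hlt' := key hba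
  · rfl
  exact absurd (hlt.trans hlt') (lt_irrefl _)

end Order

section WithBot

set_option linter.unusedSectionVars false

variable {r : Finset α → Finset α → Prop}

theorem withBotLe_refl : ∀ x, withBotLe r x x
  | none => trivial
  | some _ => Relation.ReflTransGen.refl

instance : IsTrans (Option (Finset α)) (withBotLe r) where
  trans
  | none, _, _, _, _ => trivial
  | some _, none, _, h, _ => h.elim
  | some _, some _, none, _, h => h.elim
  | some _, some _, some _, hab, hbc => Relation.ReflTransGen.trans hab hbc

theorem withBotLe_antisymm
    (h : ∀ a b, Relation.ReflTransGen r a b → Relation.ReflTransGen r b a → a = b) :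
    ∀ x y, withBotLe r x y → withBotLe r y x → x = y
  | none, none, _, _ => rfl
  | none, some _, _, h => h.elim
  | some _, none, h, _ => h.elim
  | some a, some b, hab, hba => congrArg some (h a b hab hba)

theorem HasJoinsOn.withBotLe {S : Finset (Finset α)}
    (hS : HasJoinsOn (Relation.ReflTransGen r) S) :
    HasJoinsOn (withBotLe r) (insert none (S.image some)) := by
  intro x hx y hy
  rcases Finset.mem_insert.1 hx with rfl | hx
  · exact ⟨y, hy, trivial, withBotLe_refl y, fun _ _ _ h => h⟩
  rcases Finset.mem_insert.1 hy with rfl | hy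
  · exact ⟨x, Finset.mem_insert_of_mem hx, withBotLe_refl x, trivial, fun _ _ h _ => h⟩
  obtain ⟨a, ha, rfl⟩ := Finset.mem_image.1 hx
  obtain ⟨b, hb, rfl⟩ := Finset.mem_image.1 hy
  obtain ⟨j, hj, haj, hbj, hj_le⟩ := hS a ha b hb
  refine ⟨some j, Finset.mem_insert_of_mem (Finset.mem_image_of_mem _ hj), haj, hbj, ?_⟩
  rintro (_ | c) hc hac hbc
  · exact hac.elim
  · exact hj_le c (by simpa using hc) hac hbc

end WithBot

section Matroid

variable {E : Finset α} {ℬ : Finset (Finset α)}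

def IsMatroidOn.matroid (hM : IsMatroidOn E ℬ) : Matroid α :=
  Matroid.ofIsBaseOfFinite E.finite_toSet (fun X => ∃ B ∈ ℬ, (B : Set α) = X)
    (let ⟨B, hB⟩ := hM.1; ⟨B, B, hB, rfl⟩)
    (by
      rintro _ _ ⟨B₁, hB₁, rfl⟩ ⟨B₂, hB₂, rfl⟩ e he
      obtain ⟨f, hf, hB⟩ := hM.2.2 B₁ hB₁ B₂ hB₂ e (by simpa using he)
      exact ⟨f, by simpa using hf, _, hB, by simp⟩)
    (by rintro _ ⟨B, hB, rfl⟩; exact_mod_cast hM.2.1 B hB)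

instance (hM : IsMatroidOn E ℬ) : hM.matroid.Finite := ⟨E.finite_toSet⟩

theorem IsMatroidOn.matroid_E (hM : IsMatroidOn E ℬ) : hM.matroid.E = E := rfl

theorem IsMatroidOn.isBase_matroid_iff (hM : IsMatroidOn E ℬ) {B : Finset α} :
    hM.matroid.IsBase B ↔ B ∈ ℬ :=
  ⟨fun ⟨_, hB, h⟩ => Finset.coe_injective h ▸ hB, fun h => ⟨B, h, rfl⟩⟩

theorem IsMatroidOn.indep_matroid_iff (hM : IsMatroidOn E ℬ) {S : Finset α} :
    hM.matroid.Indep S ↔ Indep ℬ S := by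
  rw [Matroid.indep_iff]
  constructor
  · rintro ⟨_, ⟨B, hB, rfl⟩, hSB⟩
    exact ⟨B, hB, by exact_mod_cast hSB⟩
  · rintro ⟨B, hB, hSB⟩
    exact ⟨B, ⟨B, hB, rfl⟩, by exact_mod_cast hSB⟩

theorem IsMatroidOn.isCircuit_matroid_iff (hM : IsMatroidOn E ℬ) {C : Finset α} :
    hM.matroid.IsCircuit C ↔ Circuit E ℬ C := by
  rw [Matroid.isCircuit_iff_forall_ssubset, Matroid.Dep, hM.indep_matroid_iff, hM.matroid_E,
    Finset.coe_subset, Circuit]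
  constructor
  · rintro ⟨⟨hdep, hCE⟩, hmin⟩
    exact ⟨hCE, hdep, fun D hD => hM.indep_matroid_iff.1 (hmin (by exact_mod_cast hD))⟩
  · rintro ⟨hCE, hdep, hmin⟩
    refine ⟨⟨hdep, hCE⟩, fun I hI => ?_⟩
    obtain ⟨D, rfl⟩ := (C.finite_toSet.subset hI.subset).exists_finset_coe
    exact hM.indep_matroid_iff.2 (hmin D (by exact_mod_cast hI))

variable {σ : α → ℕ} {B B' C C' : Finset α} {e f g : α}

theorem IsMatroidOn.exists_circuit_subset_insert (hM : IsMatroidOn E ℬ) (hB : B ∈ ℬ)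
    (hgE : g ∈ E) (hgB : g ∉ B) : ∃ C, Circuit E ℬ C ∧ C ⊆ insert g B ∧ g ∈ C := by
  have hK := (hM.isBase_matroid_iff.2 hB).fundCircuit_isCircuit hgE hgB
  obtain ⟨C, hC⟩ := (hM.matroid.set_finite _ hK.subset_ground).exists_finset_coe
  rw [← hC, hM.isCircuit_matroid_iff] at hK
  refine ⟨C, hK, ?_, ?_⟩
  · rw [← Finset.coe_subset, Finset.coe_insert, hC]
    exact hM.matroid.fundCircuit_subset_insert g B
  · rw [← Finset.mem_coe, hC]
    exact hM.matroid.mem_fundCircuit g B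

theorem IsMatroidOn.coe_circuit_eq_fundCircuit (hM : IsMatroidOn E ℬ) (hB : B ∈ ℬ)
    (hC : Circuit E ℬ C) (hCB : C ⊆ insert f B) : (C : Set α) = hM.matroid.fundCircuit f B :=
  (hM.isCircuit_matroid_iff.2 hC).eq_fundCircuit_of_subset
    (hM.isBase_matroid_iff.2 hB).indep (by exact_mod_cast hCB)

theorem IsMatroidOn.circuit_eq_of_subset_insert (hM : IsMatroidOn E ℬ) (hB : B ∈ ℬ)
    (hC : Circuit E ℬ C) (hC' : Circuit E ℬ C') (hCB : C ⊆ insert f B)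
    (hC'B : C' ⊆ insert f B) : C = C' :=
  Finset.coe_injective <| (hM.coe_circuit_eq_fundCircuit hB hC hCB).trans
    (hM.coe_circuit_eq_fundCircuit hB hC' hC'B).symm

theorem IsMatroidOn.insert_erase_mem_of_circuit (hM : IsMatroidOn E ℬ) (hB : B ∈ ℬ)
    (hf : f ∉ B) (hC : Circuit E ℬ C) (hCB : C ⊆ insert f B) (heB : e ∈ B) (heC : e ∈ C) :
    insert f (B.erase e) ∈ ℬ := by
  have hBM := hM.isBase_matroid_iff.2 hB
  have hCeq := hM.coe_circuit_eq_fundCircuit hB hC hCB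
  have hfC : f ∈ C := by rw [← Finset.mem_coe, hCeq]; exact hM.matroid.mem_fundCircuit f B
  have hfcl : f ∈ hM.matroid.closure B := by rw [hBM.closure_eq]; exact hC.1 hfC
  have hI := (hBM.indep.mem_fundCircuit_iff hfcl hf).1 (hCeq ▸ Finset.mem_coe.2 heC)
  have hfe : f ≠ e := fun h => hf (h ▸ heB)
  rw [← hM.isBase_matroid_iff, Finset.coe_insert, Finset.coe_erase,
    Set.insert_sdiff_singleton_comm hfe]
  exact hBM.exchange_isBase_of_indep' heB hf hI

theorem IsMatroidOn.extActive_iff (hM : IsMatroidOn E ℬ) (hB : B ∈ ℬ) :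
    ExtActive E ℬ σ B g ↔
      g ∉ B ∧ g ∈ hM.matroid.closure {x ∈ (B : Set α) | σ g ≤ σ x} := by
  refine and_congr_right fun hgB => ⟨?_, fun hcl => ?_⟩
  · rintro ⟨C, hC, hCB, hgC, hmin⟩
    refine hM.matroid.closure_subset_closure ?_
      ((hM.isCircuit_matroid_iff.2 hC).mem_closure_sdiff_singleton_of_mem hgC)
    rintro x ⟨hxC, hxg⟩
    exact ⟨(Finset.mem_insert.1 (hCB hxC)).resolve_left hxg, hmin x hxC⟩
  · set I := {x ∈ (B : Set α) | σ g ≤ σ x}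
    have hI : hM.matroid.Indep I := (hM.isBase_matroid_iff.2 hB).indep.subset fun x hx => hx.1
    have hK := hI.fundCircuit_isCircuit hcl fun h => hgB h.1
    obtain ⟨C, hC⟩ := (hM.matroid.set_finite _ hK.subset_ground).exists_finset_coe
    have hCI : ∀ x ∈ C, x = g ∨ x ∈ I := fun x hx =>
      hM.matroid.fundCircuit_subset_insert g I (hC ▸ Finset.mem_coe.2 hx)
    refine ⟨C, hM.isCircuit_matroid_iff.1 (hC ▸ hK), fun x hx => ?_, ?_, fun x hx => ?_⟩
    · rcases hCI x hx with rfl | hxI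
      exacts [Finset.mem_insert_self _ _, Finset.mem_insert_of_mem hxI.1]
    · rw [← Finset.mem_coe, hC]
      exact hM.matroid.mem_fundCircuit g I
    · rcases hCI x hx with rfl | hxI
      exacts [le_rfl, hxI.2]

def extPassive (E : Finset α) (ℬ : Finset (Finset α)) (σ : α → ℕ) (B : Finset α) :
    Finset α :=
  E.filter fun g => g ∉ B ∧ ¬ ExtActive E ℬ σ B g

theorem mem_extPassive :
    g ∈ extPassive E ℬ σ B ↔ g ∈ E ∧ g ∉ B ∧ ¬ ExtActive E ℬ σ B g :=
  Finset.mem_filter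

theorem IsMatroidOn.extActive_of_disjoint (hM : IsMatroidOn E ℬ) (hB : B ∈ ℬ)
    (hB' : B' ∈ ℬ) (hgB' : g ∉ B') (hdisj : Disjoint B (extPassive E ℬ σ B'))
    (h : ExtActive E ℬ σ B g) : ExtActive E ℬ σ B' g := by
  rw [hM.extActive_iff hB] at h
  rw [hM.extActive_iff hB']
  refine ⟨hgB', hM.matroid.closure_subset_closure_of_subset_closure (fun x hx => ?_) h.2⟩
  obtain ⟨hxB, hgx⟩ := hx
  have hxE : x ∈ E := hM.2.1 B hB hxB
  by_cases hxB' : x ∈ B'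
  · exact hM.matroid.mem_closure_of_mem' ⟨hxB', hgx⟩ hxE
  have hx : ExtActive E ℬ σ B' x := by
    by_contra hx
    exact Finset.disjoint_left.1 hdisj hxB (mem_extPassive.2 ⟨hxE, hxB', hx⟩)
  refine hM.matroid.closure_subset_closure ?_ ((hM.extActive_iff hB').1 hx).2
  exact fun y hy => ⟨hy.1, hgx.trans hy.2⟩

theorem not_extActive_of_forall_gt_mem (hσ : Function.Injective σ) (hB : B ∈ ℬ)
    (hfB : f ∈ B) (h : ∀ y ∈ B', σ f < σ y → y ∈ B) : ¬ ExtActive E ℬ σ B' f := by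
  rintro ⟨hfB', C, hC, hCB', hmin⟩
  refine hC.2.1 ⟨B, hB, fun x hx => ?_⟩
  rcases Finset.mem_insert.1 (hCB' hx) with rfl | hxB'
  · exact hfB
  · exact h x hxB' ((hmin.2 x hx).lt_of_ne fun hfx => hfB' (hσ hfx ▸ hxB'))

theorem IsMatroidOn.exists_extPivot_of_not_extActive (hM : IsMatroidOn E ℬ) (hB : B ∈ ℬ)
    (hgE : g ∈ E) (hgB : g ∉ B) (hg : ¬ ExtActive E ℬ σ B g) :
    ∃ e, extPivot E ℬ σ B (insert g (B.erase e)) := by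
  obtain ⟨C, hC, hCB, hgC⟩ := hM.exists_circuit_subset_insert hB hgE hgB
  obtain ⟨e, heC, hmin⟩ := C.exists_min_image σ ⟨g, hgC⟩
  have heg : e ≠ g := by rintro rfl; exact hg ⟨hgB, C, hC, hCB, heC, hmin⟩
  have heB : e ∈ B := (Finset.mem_insert.1 (hCB heC)).resolve_left heg
  exact ⟨e, hB, hM.insert_erase_mem_of_circuit hB hgB hC hCB heB heC,
    e, g, heB, hgB, rfl, C, hC, hCB, hgC, heC, heC, hmin⟩

theorem IsMatroidOn.extPassive_ssubset_of_extPivot (hM : IsMatroidOn E ℬ)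
    (hσ : Function.Injective σ) (h : extPivot E ℬ σ B B') :
    extPassive E ℬ σ B' ⊂ extPassive E ℬ σ B := by
  obtain ⟨hB, hB', e, f, heB, hfB, rfl, C, hC, hCB, hfC, heC, hmin⟩ := h
  have hfe : f ≠ e := fun h => hfB (h ▸ heB)
  have he : ExtActive E ℬ σ (insert f (B.erase e)) e := by
    refine ⟨by simp [hfe.symm], C, hC, fun x hx => ?_, hmin⟩
    have := hCB hx
    simp only [Finset.mem_insert, Finset.mem_erase] at this ⊢
    tauto
  have hf : ¬ ExtActive E ℬ σ B f := by
    rintro ⟨-, C', hC', hC'B, hmin'⟩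
    obtain rfl := hM.circuit_eq_of_subset_insert hB hC hC' hCB hC'B
    exact hfe (hσ ((hmin'.2 e heC).antisymm (hmin.2 f hfC)))
  refine (Finset.ssubset_iff_of_subset fun g hg => ?_).2
    ⟨f, mem_extPassive.2 ⟨hC.1 hfC, hfB, hf⟩,
      fun h => (mem_extPassive.1 h).2.1 (Finset.mem_insert_self _ _)⟩
  obtain ⟨hgE, hgB', hg⟩ := mem_extPassive.1 hg
  have hge : g ≠ e := by rintro rfl; exact hg he
  have hgB : g ∉ B := fun h => hgB' (Finset.mem_insert_of_mem (Finset.mem_erase.2 ⟨hge, h⟩))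
  refine mem_extPassive.2
    ⟨hgE, hgB, fun hact => hg (hM.extActive_of_disjoint hB hB' hgB' ?_ hact)⟩
  refine Finset.disjoint_left.2 fun x hxB hx => ?_
  obtain ⟨-, hxB', hx⟩ := mem_extPassive.1 hx
  by_cases hxe : x = e
  · exact hx (hxe ▸ he)
  · exact hxB' (Finset.mem_insert_of_mem (Finset.mem_erase.2 ⟨hxe, hxB⟩))

theorem IsMatroidOn.extPassive_subset_of_reflTransGen (hM : IsMatroidOn E ℬ)
    (hσ : Function.Injective σ) (h : Relation.ReflTransGen (extPivot E ℬ σ) B B') :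
    extPassive E ℬ σ B' ⊆ extPassive E ℬ σ B := by
  induction h with
  | refl => exact subset_rfl
  | tail _ hp ih => exact (hM.extPassive_ssubset_of_extPivot hσ hp).subset.trans ih

theorem IsMatroidOn.exists_extPivot_of_extPassive_subset (hM : IsMatroidOn E ℬ)
    (hσ : Function.Injective σ) (hB : B ∈ ℬ) (hB' : B' ∈ ℬ) (hne : B ≠ B')
    (hsub : extPassive E ℬ σ B' ⊆ extPassive E ℬ σ B) :
    ∃ B'', extPivot E ℬ σ B B'' ∧ extPassive E ℬ σ B' ⊆ extPassive E ℬ σ B'' := by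
  obtain ⟨f, hf, hmax⟩ := (symmDiff B B').exists_max_image σ (Finset.symmDiff_nonempty.2 hne)
  have hagree : ∀ y, σ f < σ y → (y ∈ B ↔ y ∈ B') := fun y hy => by
    by_contra h
    exact (hmax y (Finset.mem_symmDiff.2 (by tauto))).not_gt hy
  have hfB' : f ∈ B' ∧ f ∉ B := by
    refine (Finset.mem_symmDiff.1 hf).resolve_left fun ⟨hfB, hfB'⟩ => ?_
    refine not_extActive_of_forall_gt_mem (E := E) hσ hB hfB
      (fun y hy hlt => (hagree y hlt).2 hy) ?_
    by_contra hact
    exact (mem_extPassive.1 (hsub (mem_extPassive.2 ⟨hM.2.1 B hB hfB, hfB', hact⟩))).2.1 hfB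
  obtain ⟨e, hpiv⟩ := hM.exists_extPivot_of_not_extActive hB (hM.2.1 B' hB' hfB'.1) hfB'.2
    (not_extActive_of_forall_gt_mem hσ hB' hfB'.1 fun y hy hlt => (hagree y hlt).1 hy)
  refine ⟨_, hpiv, fun g hg => ?_⟩
  obtain ⟨hgE, hgB', hg'⟩ := mem_extPassive.1 hg
  have hgB : g ∉ B := (mem_extPassive.1 (hsub hg)).2.1
  have hgB'' : g ∉ insert f (B.erase e) := by
    simp only [Finset.mem_insert, Finset.mem_erase, not_or]
    exact ⟨fun h => hgB' (h ▸ hfB'.1), fun h => hgB h.2⟩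
  refine mem_extPassive.2 ⟨hgE, hgB'', fun hact => hg' ?_⟩
  refine hM.extActive_of_disjoint hpiv.2.1 hB' hgB'
    (Finset.disjoint_left.2 fun x hx hxP => ?_) hact
  rcases Finset.mem_insert.1 hx with rfl | hx
  · exact (mem_extPassive.1 hxP).2.1 hfB'.1
  · exact (mem_extPassive.1 (hsub hxP)).2.1 (Finset.mem_of_mem_erase hx)

theorem IsMatroidOn.reflTransGen_of_extPassive_subset (hM : IsMatroidOn E ℬ)
    (hσ : Function.Injective σ) {B B' : Finset α} (hB : B ∈ ℬ) (hB' : B' ∈ ℬ)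
    (hsub : extPassive E ℬ σ B' ⊆ extPassive E ℬ σ B) :
    Relation.ReflTransGen (extPivot E ℬ σ) B B' := by
  obtain rfl | hne := eq_or_ne B B'
  · exact .refl
  obtain ⟨B'', hp, hsub''⟩ := hM.exists_extPivot_of_extPassive_subset hσ hB hB' hne hsub
  have := Finset.card_lt_card (hM.extPassive_ssubset_of_extPivot hσ hp)
  exact .head hp (hM.reflTransGen_of_extPassive_subset hσ hp.2.1 hB' hsub'')
termination_by (extPassive E ℬ σ B).card

theorem IsMatroidOn.exists_greatest_extPassive_subset (hM : IsMatroidOn E ℬ)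
    (hσ : Function.Injective σ) {S : Finset α} (hS : ∃ B ∈ ℬ, Disjoint B S) :
    ∃ J ∈ ℬ, extPassive E ℬ σ J ⊆ S ∧
      ∀ C ∈ ℬ, extPassive E ℬ σ C ⊆ S →
        extPassive E ℬ σ C ⊆ extPassive E ℬ σ J := by
  obtain ⟨J, hJ, hmin⟩ := (ℬ.filter (Disjoint · S)).exists_min_image
    (fun B => (extPassive E ℬ σ B).card)
    (let ⟨B, hB, h⟩ := hS; ⟨B, Finset.mem_filter.2 ⟨hB, h⟩⟩)
  obtain ⟨hJ, hJS⟩ := Finset.mem_filter.1 hJ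
  refine ⟨J, hJ, fun g hg => ?_, fun C hC hCS g hg => ?_⟩
  · obtain ⟨hgE, hgJ, hg⟩ := mem_extPassive.1 hg
    by_contra hgS
    obtain ⟨e, hpiv⟩ := hM.exists_extPivot_of_not_extActive hJ hgE hgJ hg
    have hdisj : Disjoint (insert g (J.erase e)) S :=
      Finset.disjoint_insert_left.2 ⟨hgS, hJS.mono_left (Finset.erase_subset _ _)⟩
    exact (hmin _ (Finset.mem_filter.2 ⟨hpiv.2.1, hdisj⟩)).not_gt
      (Finset.card_lt_card (hM.extPassive_ssubset_of_extPivot hσ hpiv))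
  · obtain ⟨hgE, hgC, hg'⟩ := mem_extPassive.1 hg
    have hgJ : g ∉ J := fun h => Finset.disjoint_left.1 hJS h (hCS hg)
    exact mem_extPassive.2 ⟨hgE, hgJ,
      fun hact => hg' (hM.extActive_of_disjoint hJ hC hgC (hJS.mono_right hCS) hact)⟩

theorem IsMatroidOn.hasJoinsOn_reflTransGen_extPivot (hM : IsMatroidOn E ℬ)
    (hσ : Function.Injective σ) : HasJoinsOn (Relation.ReflTransGen (extPivot E ℬ σ)) ℬ := by
  intro B₁ hB₁ B₂ hB₂
  obtain ⟨J, hJ, hJS, hJ_ge⟩ :=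
    hM.exists_greatest_extPassive_subset hσ
      (S := extPassive E ℬ σ B₁ ∩ extPassive E ℬ σ B₂)
      ⟨B₁, hB₁, Finset.disjoint_left.2 fun x hx hxS =>
        (mem_extPassive.1 (Finset.mem_inter.1 hxS).1).2.1 hx⟩
  refine ⟨J, hJ,
    hM.reflTransGen_of_extPassive_subset hσ hB₁ hJ (hJS.trans Finset.inter_subset_left),
    hM.reflTransGen_of_extPassive_subset hσ hB₂ hJ (hJS.trans Finset.inter_subset_right),
    fun C hC h₁ h₂ => hM.reflTransGen_of_extPassive_subset hσ hJ hC (hJ_ge C hC ?_)⟩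
  exact Finset.subset_inter (hM.extPassive_subset_of_reflTransGen hσ h₁)
    (hM.extPassive_subset_of_reflTransGen hσ h₂)

end Matroid

/-- Las Vergnas: the external order on the bases of a matroid, with a bottom element
`0̂` adjoined, is a lattice: it is a partial order in which every pair of elements has
a join and a meet. -/
theorem external_order_with_bot_is_lattice
    (E : Finset α) (ℬ : Finset (Finset α)) (hM : IsMatroidOn E ℬ)
    (σ : α → ℕ) (hσ : Function.Injective σ) :
    ∀ P : Finset (Option (Finset α)), P = insert none (ℬ.image some) →
    ∀ le : Option (Finset α) → Option (Finset α) → Prop,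
      le = withBotLe (extPivot E ℬ σ) →
    (∀ a ∈ P, ∀ b ∈ P, le a b → le b a → a = b) ∧
    (∀ a ∈ P, ∀ b ∈ P, ∃ j ∈ P, le a j ∧ le b j ∧
      ∀ c ∈ P, le a c → le b c → le j c) ∧
    (∀ a ∈ P, ∀ b ∈ P, ∃ m ∈ P, le m a ∧ le m b ∧
      ∀ c ∈ P, le c a → le c b → le c m) := by
  rintro P rfl le rfl
  have hjoins := (hM.hasJoinsOn_reflTransGen_extPivot hσ).withBotLe
  refine ⟨fun a _ b _ => withBotLe_antisymm ?_ a b, hjoins,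
    hjoins.hasJoinsOn_flip (Finset.mem_insert_self _ _) fun _ _ => trivial⟩
  exact fun _ _ => eq_of_reflTransGen_of_reflTransGen (extPassive E ℬ σ)
    fun _ _ => hM.extPassive_ssubset_of_extPivot hσ

end TutteActivities
end
end
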